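/- For every m ≥ 1, the Bernoulli-Carlitz numbers satisfy BC_m = (−1)^m Π(m) · det A, where A is the m×m lower Hessenberg matrix over k with entries A_{i,j} = δ*_{i−j+1} for 1 ≤ j ≤ i ≤ m, A_{i,i+1} = 1 for 1 ≤ i ≤ m−1, and A_{i,j} = 0 for j > i+1; here δ*_e = 1/D_n if e = r^n − 1 for some nonnegative integer n, and δ*_e = 0 otherwise. -/

import Mathlib

noncomputable section

/-- The Carlitz bracket `[i] = T^(r^i) - T` in `k = 𝔽_r(T)`, where `r = |Fq|`. -/
def carlitzBracket (Fq : Type*) [Field Fq] [Fintype Fq] (i : ℕ) : RatFunc Fq :=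
  RatFunc.X ^ (Fintype.card Fq) ^ i - RatFunc.X

/-- `D_0 = 1`, `D_i = [i]·[i-1]^r ⋯ [1]^(r^(i-1))`, via `D_{i+1} = [i+1] * D_i ^ r`. -/
def carlitzD (Fq : Type*) [Field Fq] [Fintype Fq] : ℕ → RatFunc Fq
  | 0 => 1
  | i + 1 => carlitzBracket Fq (i + 1) * carlitzD Fq i ^ Fintype.card Fq

/-- The Carlitz factorial `Π(n) = ∏_j D_j ^ c_j`, where `n = ∑_j c_j r^j` is the base-`r`
expansion of `n`. -/
def carlitzPi (Fq : Type*) [Field Fq] [Fintype Fq] (n : ℕ) : RatFunc Fq :=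
  ∏ j ∈ Finset.range (n + 1),
    carlitzD Fq j ^ ((Nat.digits (Fintype.card Fq) n).getD j 0)

/-- `δ*_e = 1/D_n` if `e = r^n - 1` for some nonnegative integer `n`, and `0` otherwise.
(Note that `e + 1` is a power of `r` iff `r ^ log_r (e+1) = e + 1`, and then
`n = log_r (e+1)` is unique.) -/
def deltaStar (Fq : Type*) [Field Fq] [Fintype Fq] (e : ℕ) : RatFunc Fq :=
  if (Fintype.card Fq) ^ (Nat.log (Fintype.card Fq) (e + 1)) = e + 1 then
    (carlitzD Fq (Nat.log (Fintype.card Fq) (e + 1)))⁻¹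
  else 0

/-- The Bernoulli-Carlitz numbers, defined by `z/e_C(z) = ∑_n (BC_n/Π(n)) z^n`, where
`e_C(z)/z = ∑_e δ*_e z^e`. -/
def bernoulliCarlitz (Fq : Type*) [Field Fq] [Fintype Fq] (n : ℕ) : RatFunc Fq :=
  carlitzPi Fq n * PowerSeries.coeff (R := RatFunc Fq) n (PowerSeries.mk (deltaStar Fq))⁻¹


/-! The coefficients `b` of `f⁻¹`, for a power series `f = ∑ aₑ Xᵉ` with `a₀ = 1`, solve the
unitriangular Toeplitz system `(a_{i-j}) b = e₀`. By Cramer's rule `bₙ` is the `(n, 0)` cofactor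
of this matrix, i.e. `(-1)ⁿ` times the minor without row `0` and column `n`; that minor is the
Hessenberg matrix `(a_{i-j+1})`, whose superdiagonal of ones is the constant term `a₀`.
Apply this to `f = e_C(z)/z = ∑ δ*ₑ zᵉ`. -/

namespace PowerSeries

open Matrix

section CommRing

variable {R : Type*} [CommRing R]

def lowerToeplitz (f : R⟦X⟧) (n : ℕ) : Matrix (Fin n) (Fin n) R :=
  of fun i j => if (j : ℕ) ≤ i then coeff ((i : ℕ) - j) f else 0

def hessenberg (f : R⟦X⟧) (n : ℕ) : Matrix (Fin n) (Fin n) R :=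
  of fun i j =>
    if (j : ℕ) = i + 1 then 1 else if (j : ℕ) ≤ i then coeff ((i : ℕ) - j + 1) f else 0

theorem det_lowerToeplitz (f : R⟦X⟧) (n : ℕ) :
    (lowerToeplitz f n).det = constantCoeff f ^ n := by
  have hlower : (lowerToeplitz f n).IsLowerTriangular := fun i j hij =>
    if_neg (not_le.mpr (Fin.lt_def.mp hij))
  rw [det_of_isLowerTriangular _ hlower]
  simp [lowerToeplitz]

theorem lowerToeplitz_mulVec_coeff (f g : R⟦X⟧) (n : ℕ) :
    lowerToeplitz f n *ᵥ (fun j : Fin n => coeff j g) =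
      fun i : Fin n => coeff (i : ℕ) (f * g) := by
  funext i
  have hrange : (Finset.range n).filter (· ≤ (i : ℕ)) = Finset.range (i + 1) := by
    ext j; simp only [Finset.mem_filter, Finset.mem_range]; omega
  simp only [mulVec, dotProduct, lowerToeplitz, of_apply, ite_mul, zero_mul]
  rw [Fin.sum_univ_eq_sum_range (fun j => if j ≤ (i : ℕ) then coeff (i - j) f * coeff j g else 0),
    ← Finset.sum_filter, hrange, mul_comm, coeff_mul, Finset.Nat.sum_antidiagonal_eq_sum_range_succ
      (fun p q => coeff p g * coeff q f)]
  exact Finset.sum_congr rfl fun j _ => mul_comm _ _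

theorem lowerToeplitz_submatrix_succ_castSucc {f : R⟦X⟧} (hf : constantCoeff f = 1) (n : ℕ) :
    (lowerToeplitz f (n + 1)).submatrix Fin.succ Fin.castSucc = hessenberg f n := by
  ext i j
  simp only [submatrix_apply, lowerToeplitz, hessenberg, of_apply, Fin.val_succ, Fin.val_castSucc]
  rcases lt_trichotomy (j : ℕ) (i + 1) with h | h | h
  · have hji : (j : ℕ) ≤ i := Nat.lt_succ_iff.mp h
    rw [if_pos h.le, if_neg h.ne, if_pos hji, Nat.sub_add_comm hji]
  · simp [h, hf]
  · rw [if_neg (not_le.mpr h), if_neg h.ne', if_neg (by omega)]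

end CommRing

theorem coeff_inv_eq_neg_one_pow_mul_det_hessenberg {K : Type*} [Field K] {f : K⟦X⟧}
    (hf : constantCoeff f = 1) (n : ℕ) :
    coeff n f⁻¹ = (-1) ^ n * (hessenberg f n).det := by
  set T := lowerToeplitz f (n + 1)
  have hsolve : T *ᵥ (fun j : Fin (n + 1) => coeff j f⁻¹) = Pi.single 0 1 := by
    rw [lowerToeplitz_mulVec_coeff f f⁻¹, PowerSeries.mul_inv_cancel f (by simp [hf])]
    ext i
    simp only [coeff_one, Pi.single_apply, Fin.ext_iff, Fin.val_zero]
  have hadj : (fun j : Fin (n + 1) => coeff j f⁻¹) = T.adjugate *ᵥ Pi.single 0 1 := by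
    rw [← hsolve, mulVec_mulVec, adjugate_mul, det_lowerToeplitz, hf, one_pow,
      one_smul, one_mulVec]
  calc coeff n f⁻¹ = T.adjugate (Fin.last n) 0 := by simpa using congrFun hadj (Fin.last n)
    _ = (-1) ^ n * (hessenberg f n).det := by
      rw [adjugate_fin_succ_eq_det_submatrix, Fin.succAbove_zero, Fin.succAbove_last,
        lowerToeplitz_submatrix_succ_castSucc hf]
      simp

end PowerSeries

theorem bernoulliCarlitz_det_general (Fq : Type*) [Field Fq] [Fintype Fq]
    (m : ℕ) :
    bernoulliCarlitz Fq m = (-1 : RatFunc Fq) ^ m * carlitzPi Fq m *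
      Matrix.det (Matrix.of fun i j : Fin m =>
        if (j : ℕ) = (i : ℕ) + 1 then 1
        else if (j : ℕ) ≤ (i : ℕ) then deltaStar Fq ((i : ℕ) - (j : ℕ) + 1)
        else 0) := by
  have hδ : PowerSeries.constantCoeff (PowerSeries.mk (deltaStar Fq)) = 1 := by
    simp [deltaStar, carlitzD]
  rw [bernoulliCarlitz, PowerSeries.coeff_inv_eq_neg_one_pow_mul_det_hessenberg hδ,
    mul_left_comm, mul_assoc]
  simp only [PowerSeries.hessenberg, PowerSeries.coeff_mk]

/-- **Determinant expression of Bernoulli-Carlitz numbers.**  For every `m ≥ 1`,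
`BC_m = (-1)^m Π(m) det A`, where `A` is the `m × m` lower Hessenberg matrix with entries
`A_{i,j} = δ*_{i-j+1}` for `j ≤ i`, `A_{i,i+1} = 1`, and `A_{i,j} = 0` otherwise. -/
theorem bernoulliCarlitz_det (Fq : Type*) [Field Fq] [Fintype Fq]
    (m : ℕ) (hm : 1 ≤ m) :
    bernoulliCarlitz Fq m = (-1 : RatFunc Fq) ^ m * carlitzPi Fq m *
      Matrix.det (Matrix.of fun i j : Fin m =>
        if (j : ℕ) = (i : ℕ) + 1 then 1
        else if (j : ℕ) ≤ (i : ℕ) then deltaStar Fq ((i : ℕ) - (j : ℕ) + 1)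
        else 0) :=
  bernoulliCarlitz_det_general Fq m
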